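/- Let Λ̂, Λ̄₀ be d×d symmetric matrices with Λ̂ positive definite, let Φ̄ ∈ ℝ^{N×d}, Φ ∈ ℝ^{N×d}, γ > 0, and B = γΛ̂⁻¹ΦᵀΦ̄. Suppose ‖Λ̂^{-1/2}Λ̄₀Λ̂^{-1/2}‖₂ ≤ a, ‖ΦΛ̂⁻¹Φᵀ‖₂ ≤ 1, and ‖Λ̂^{-1/2}Φ̄ᵀΦ̄Λ̂^{-1/2}‖₂ ≤ b. Then for every i ≥ 0 and v ∈ ℝ^d, ‖B^i Λ̂^{-1/2} v‖²_{Λ̄₀} ≤ γ^{2i}·a·b^i·‖v‖₂², where ‖x‖²_{Λ̄₀} = xᵀΛ̄₀x. -/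

import Mathlib

/-! With `T = Λ̂^{-1/2}` (symmetric, `T * T = Λ̂⁻¹`) and `M = T Φᵀ Φ̄ T` we have
`B = γ • T * (T Φᵀ Φ̄)`, hence `Bⁱ T = γⁱ • T Mⁱ` by `(x y)ⁱ x = x (y x)ⁱ`. The `Λ̄₀`-form of
`T Mⁱ v` is the quadratic form of `T Λ̄₀ T` at `Mⁱ v`, at most `a ‖Mⁱ v‖²`, and `M` contracts
by `b`: with `u = Φ̄ T w`, `‖M w‖² = uᵀ (Φ Λ̂⁻¹ Φᵀ) u ≤ ‖u‖² = wᵀ (T Φ̄ᵀ Φ̄ T) w ≤ b ‖w‖²`. -/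

open Matrix

noncomputable def Matrix.PosSemidef.sqrt {n : Type*} [Fintype n] [DecidableEq n] {𝕜 : Type*}
    [RCLike 𝕜] [PartialOrder 𝕜] {A : Matrix n n 𝕜} (hA : A.PosSemidef) : Matrix n n 𝕜 :=
  hA.1.eigenvectorUnitary.1 * diagonal ((↑) ∘ (√·) ∘ hA.1.eigenvalues) *
    (star hA.1.eigenvectorUnitary : Matrix n n 𝕜)

noncomputable def matSpectralNorm {n : ℕ} (A : Matrix (Fin n) (Fin n) ℝ) : ℝ :=
  ‖Matrix.toEuclideanCLM (𝕜 := ℝ) A‖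

namespace Matrix

variable {m n : Type*} [Fintype m] [Fintype n]

theorem mulVec_dotProduct_mulVec_mulVec {R : Type*} [CommSemiring R] (A : Matrix m n R)
    (C : Matrix m m R) (u : n → R) : A *ᵥ u ⬝ᵥ C *ᵥ A *ᵥ u = u ⬝ᵥ (Aᵀ * C * A) *ᵥ u := by
  rw [← mulVec_mulVec, ← mulVec_mulVec, dotProduct_mulVec u, vecMul_transpose]

theorem mulVec_dotProduct_mulVec_self {R : Type*} [CommSemiring R] (A : Matrix m n R)
    (u : n → R) : A *ᵥ u ⬝ᵥ A *ᵥ u = u ⬝ᵥ (Aᵀ * A) *ᵥ u := by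
  rw [← mulVec_mulVec, dotProduct_mulVec u, vecMul_transpose]

theorem mulVec_pow_dotProduct_le [DecidableEq n] {M : Matrix n n ℝ} {b : ℝ} (hb : 0 ≤ b)
    (hM : ∀ w, M *ᵥ w ⬝ᵥ M *ᵥ w ≤ b * (w ⬝ᵥ w)) (i : ℕ) (v : n → ℝ) :
    (M ^ i) *ᵥ v ⬝ᵥ (M ^ i) *ᵥ v ≤ b ^ i * (v ⬝ᵥ v) := by
  induction i with
  | zero => simp
  | succ i ih =>
    rw [pow_succ', ← mulVec_mulVec, pow_succ', mul_assoc]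
    exact (hM _).trans (mul_le_mul_of_nonneg_left ih hb)

section PosSemidefSqrt

open scoped ComplexOrder

variable [DecidableEq n] {𝕜 : Type*} [RCLike 𝕜] {A : Matrix n n 𝕜}

theorem PosSemidef.sqrt_mul_self (hA : A.PosSemidef) : hA.sqrt * hA.sqrt = A := by
  set U : Matrix n n 𝕜 := (hA.1.eigenvectorUnitary : Matrix n n 𝕜)
  have hU : star U * U = 1 := Unitary.coe_star_mul_self _
  conv_rhs => rw [hA.1.spectral_theorem, Unitary.conjStarAlgAut_apply]
  calc hA.sqrt * hA.sqrt
      = U * (diagonal ((↑) ∘ (√·) ∘ hA.1.eigenvalues) * (star U * U) *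
          diagonal ((↑) ∘ (√·) ∘ hA.1.eigenvalues)) * star U := by
        simp only [PosSemidef.sqrt, U, Matrix.mul_assoc]
    _ = _ := by
        rw [hU, Matrix.mul_one, diagonal_mul_diagonal]
        congr 3
        funext i
        simp only [Function.comp_apply, ← RCLike.ofReal_mul,
          Real.mul_self_sqrt (hA.eigenvalues_nonneg i)]

theorem PosSemidef.isHermitian_sqrt (hA : A.PosSemidef) : hA.sqrt.IsHermitian := by
  have hD : star ((RCLike.ofReal : ℝ → 𝕜) ∘ (√·) ∘ hA.1.eigenvalues) =
      (RCLike.ofReal : ℝ → 𝕜) ∘ (√·) ∘ hA.1.eigenvalues := by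
    funext i; simp
  simp [IsHermitian, PosSemidef.sqrt, conjTranspose_mul, diagonal_conjTranspose, Matrix.mul_assoc,
    Matrix.star_eq_conjTranspose, hD]

theorem PosSemidef.inv_sqrt_mul_inv_sqrt (hA : A.PosSemidef) : hA.sqrt⁻¹ * hA.sqrt⁻¹ = A⁻¹ := by
  rw [← Matrix.mul_inv_rev, hA.sqrt_mul_self]

end PosSemidefSqrt

theorem PosSemidef.transpose_inv_sqrt [DecidableEq n] {A : Matrix n n ℝ} (hA : A.PosSemidef) :
    hA.sqrt⁻¹ᵀ = hA.sqrt⁻¹ := by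
  simpa [IsHermitian] using hA.isHermitian_sqrt.inv

end Matrix

theorem dotProduct_mulVec_le_matSpectralNorm {n : ℕ} (A : Matrix (Fin n) (Fin n) ℝ)
    (x : Fin n → ℝ) : x ⬝ᵥ A *ᵥ x ≤ matSpectralNorm A * (x ⬝ᵥ x) := by
  set y : EuclideanSpace ℝ (Fin n) := WithLp.toLp 2 x
  have hy : x ⬝ᵥ x = ‖y‖ ^ 2 := by
    rw [← real_inner_self_eq_norm_sq, EuclideanSpace.inner_eq_star_dotProduct]; simp [y]
  rw [← inner_toEuclideanCLM, hy]
  calc _ ≤ ‖y‖ * ‖toEuclideanCLM (𝕜 := ℝ) A y‖ := real_inner_le_norm _ _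
    _ ≤ ‖y‖ * (matSpectralNorm A * ‖y‖) := by gcongr; exact (toEuclideanCLM (𝕜 := ℝ) A).le_opNorm y
    _ = _ := by ring

theorem mulVec_dotProduct_mulVec_mulVec_le {m n : ℕ} (A : Matrix (Fin m) (Fin n) ℝ)
    (C : Matrix (Fin m) (Fin m) ℝ) (y : Fin n → ℝ) :
    A *ᵥ y ⬝ᵥ C *ᵥ A *ᵥ y ≤ matSpectralNorm (Aᵀ * C * A) * (y ⬝ᵥ y) := by
  rw [mulVec_dotProduct_mulVec_mulVec]
  exact dotProduct_mulVec_le_matSpectralNorm _ y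

theorem mulVec_transpose_mul_dotProduct_le {N d : ℕ} (P Q : Matrix (Fin N) (Fin d) ℝ)
    (w : Fin d → ℝ) :
    (Pᵀ * Q) *ᵥ w ⬝ᵥ (Pᵀ * Q) *ᵥ w ≤
      matSpectralNorm (P * Pᵀ) * matSpectralNorm (Qᵀ * Q) * (w ⬝ᵥ w) := by
  calc (Pᵀ * Q) *ᵥ w ⬝ᵥ (Pᵀ * Q) *ᵥ w = Q *ᵥ w ⬝ᵥ (P * Pᵀ) *ᵥ Q *ᵥ w := by
        rw [← mulVec_mulVec, mulVec_dotProduct_mulVec_self, transpose_transpose]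
    _ ≤ matSpectralNorm (P * Pᵀ) * (Q *ᵥ w ⬝ᵥ Q *ᵥ w) := dotProduct_mulVec_le_matSpectralNorm _ _
    _ ≤ matSpectralNorm (P * Pᵀ) * (matSpectralNorm (Qᵀ * Q) * (w ⬝ᵥ w)) := by
        gcongr
        · exact norm_nonneg _
        · rw [mulVec_dotProduct_mulVec_self]; exact dotProduct_mulVec_le_matSpectralNorm _ _
    _ = _ := by ring

theorem mulVec_sandwich_dotProduct_le {N d : ℕ} {T : Matrix (Fin d) (Fin d) ℝ} (hT : Tᵀ = T)
    (Φ Φb : Matrix (Fin N) (Fin d) ℝ) (w : Fin d → ℝ) :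
    (T * Φᵀ * Φb * T) *ᵥ w ⬝ᵥ (T * Φᵀ * Φb * T) *ᵥ w ≤
      matSpectralNorm (Φ * (T * T) * Φᵀ) * matSpectralNorm (T * (Φbᵀ * Φb) * T) * (w ⬝ᵥ w) := by
  convert mulVec_transpose_mul_dotProduct_le (Φ * T) (Φb * T) w using 4 <;>
    simp only [transpose_mul, hT, Matrix.mul_assoc]

theorem contraction_bound_general {N d : ℕ} (Λh Λ₀ : Matrix (Fin d) (Fin d) ℝ)
    (hΛh : Λh.PosDef)
    (Φ Φb : Matrix (Fin N) (Fin d) ℝ) (γ : ℝ)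
    (a b : ℝ)
    (ha : matSpectralNorm ((hΛh.posSemidef.sqrt)⁻¹ * Λ₀ * (hΛh.posSemidef.sqrt)⁻¹) ≤ a)
    (h1 : matSpectralNorm (Φ * Λh⁻¹ * Φ.transpose) ≤ 1)
    (hb : matSpectralNorm ((hΛh.posSemidef.sqrt)⁻¹ * (Φb.transpose * Φb) * (hΛh.posSemidef.sqrt)⁻¹) ≤ b)
    (B : Matrix (Fin d) (Fin d) ℝ) (hB : B = γ • (Λh⁻¹ * Φ.transpose * Φb)) :
    ∀ (i : ℕ) (v : Fin d → ℝ),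
      ((B ^ i * (hΛh.posSemidef.sqrt)⁻¹).mulVec v) ⬝ᵥ
          Λ₀.mulVec ((B ^ i * (hΛh.posSemidef.sqrt)⁻¹).mulVec v)
        ≤ γ ^ (2 * i) * a * b ^ i * (v ⬝ᵥ v) := by
  intro i v
  set T := hΛh.posSemidef.sqrt⁻¹
  have hT : Tᵀ = T := hΛh.posSemidef.transpose_inv_sqrt
  have hTT : T * T = Λh⁻¹ := hΛh.posSemidef.inv_sqrt_mul_inv_sqrt
  set M := T * Φᵀ * Φb * T with hMdef
  have hBT : B ^ i * T = γ ^ i • (T * M ^ i) := by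
    rw [hB, smul_pow, smul_mul, ← hTT, hMdef]
    simpa only [Matrix.mul_assoc] using congrArg (γ ^ i • ·) (mul_pow_mul T (T * Φᵀ * Φb) i)
  have hM (w : Fin d → ℝ) : M *ᵥ w ⬝ᵥ M *ᵥ w ≤ b * (w ⬝ᵥ w) := by
    refine (mulVec_sandwich_dotProduct_le hT Φ Φb w).trans ?_
    rw [hTT, ← one_mul b]
    gcongr
    exacts [dotProduct_star_self_nonneg w, norm_nonneg _]
  have hΛ₀ := mulVec_dotProduct_mulVec_mulVec_le T Λ₀ (M ^ i *ᵥ v)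
  rw [hT] at hΛ₀
  have hγ_pow : 0 ≤ γ ^ (2 * i) := (even_two_mul i).pow_nonneg γ
  calc (B ^ i * T) *ᵥ v ⬝ᵥ Λ₀ *ᵥ (B ^ i * T) *ᵥ v
      = γ ^ (2 * i) * (T *ᵥ M ^ i *ᵥ v ⬝ᵥ Λ₀ *ᵥ T *ᵥ M ^ i *ᵥ v) := by
        rw [hBT, smul_mulVec, ← mulVec_mulVec, mulVec_smul, smul_dotProduct, dotProduct_smul,
          smul_smul, smul_eq_mul, ← pow_add, two_mul]
    _ ≤ γ ^ (2 * i) * (a * (b ^ i * (v ⬝ᵥ v))) := by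
        gcongr
        exact hΛ₀.trans (mul_le_mul ha (mulVec_pow_dotProduct_le ((norm_nonneg _).trans hb) hM i v)
          (dotProduct_star_self_nonneg _) ((norm_nonneg _).trans ha))
    _ = _ := by ring

/-- Contraction bound: if ‖Λ̂^{-1/2}Λ̄₀Λ̂^{-1/2}‖₂ ≤ a, ‖ΦΛ̂⁻¹Φᵀ‖₂ ≤ 1 and
‖Λ̂^{-1/2}Φ̄ᵀΦ̄Λ̂^{-1/2}‖₂ ≤ b, then for B = γΛ̂⁻¹ΦᵀΦ̄ we have
‖BⁱΛ̂^{-1/2}v‖²_{Λ̄₀} ≤ γ^{2i}·a·bⁱ·‖v‖₂². -/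
theorem contraction_bound {N d : ℕ} (Λh Λ₀ : Matrix (Fin d) (Fin d) ℝ)
    (hΛh : Λh.PosDef) (hΛ₀ : Λ₀.PosSemidef)
    (Φ Φb : Matrix (Fin N) (Fin d) ℝ) (γ : ℝ) (hγ : 0 < γ)
    (a b : ℝ)
    (ha : matSpectralNorm ((hΛh.posSemidef.sqrt)⁻¹ * Λ₀ * (hΛh.posSemidef.sqrt)⁻¹) ≤ a)
    (h1 : matSpectralNorm (Φ * Λh⁻¹ * Φ.transpose) ≤ 1)
    (hb : matSpectralNorm ((hΛh.posSemidef.sqrt)⁻¹ * (Φb.transpose * Φb) * (hΛh.posSemidef.sqrt)⁻¹) ≤ b)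
    (B : Matrix (Fin d) (Fin d) ℝ) (hB : B = γ • (Λh⁻¹ * Φ.transpose * Φb)) :
    ∀ (i : ℕ) (v : Fin d → ℝ),
      ((B ^ i * (hΛh.posSemidef.sqrt)⁻¹).mulVec v) ⬝ᵥ
          Λ₀.mulVec ((B ^ i * (hΛh.posSemidef.sqrt)⁻¹).mulVec v)
        ≤ γ ^ (2 * i) * a * b ^ i * (v ⬝ᵥ v) :=
  contraction_bound_general Λh Λ₀ hΛh Φ Φb γ a b ha h1 hb B hB
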